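/- Let v > 1 and μ ∈ ℝ. Then the equation Φ(x)/Φ_{μ,v}(x) = N(x)/N_{μ,v}(x) has a unique real solution α_{μ,v}. Moreover, for any s > Φ_{μ,v}^{-1}(Φ_{μ,v}(α_{μ,v})/Φ(α_{μ,v})), the equation (1 − Φ(x)) / (Φ_{μ,v}(s) − Φ_{μ,v}(x)) = N(x) / N_{μ,v}(x) has exactly two real solutions, and exactly the larger of the two solutions is greater than α_{μ,v}. -/

import Mathlib

open MeasureTheory

/-- Density of the normal distribution with mean `μ` and variance `v`. -/
noncomputable def nPDF (μ v x : ℝ) : ℝ :=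
  (Real.sqrt (2 * Real.pi * v))⁻¹ * Real.exp (-(x - μ) ^ 2 / (2 * v))

/-- Cumulative distribution function of the normal distribution with mean `μ`
and variance `v`. -/
noncomputable def nCDF (μ v x : ℝ) : ℝ := ∫ t in Set.Iic x, nPDF μ v t

/-!
Write `R = N / N_{μ,v}` and `x₀ = μ / (1 - v)`. Since `v > 1`, `log R` is a concave parabola with
vertex `x₀`, so `R' = -((v - 1) / v) (x - x₀) R` and `R → 0` at `±∞`. Each equation says that a gap
`A - R B` vanishes, where `A' = R B'` (`A = Φ`, `B = Φ_{μ,v}`, resp. `A = 1 - Φ`,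
`B = Φ_{μ,v}(s) - Φ_{μ,v}`); hence `(A - R B)' = ((v - 1) / v) (x - x₀) R B`, and where `B > 0` the
gap decreases left of `x₀` and increases right of it. The first gap tends to `0` at `-∞` and to `1`
at `+∞`, so it is negative up to `x₀` and has a single zero `α` beyond. The second gap is positive
from `s` on, tends to `1` at `-∞`, and the condition on `s` makes it negative at `α`, so it has one
zero left of `x₀` and one in `(α, s)`.
-/

open Set Filter Topology ProbabilityTheory Real

variable {μ v : ℝ}

lemma nPDF_pos (hv : 0 < v) (x : ℝ) : 0 < nPDF μ v x := by
  unfold nPDF; positivity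

lemma continuous_nPDF : Continuous (nPDF μ v) := by
  unfold nPDF; fun_prop

lemma integrable_nPDF (hv : 0 ≤ v) : Integrable (nPDF μ v) :=
  integrable_gaussianPDFReal μ (⟨v, hv⟩ : NNReal)

lemma nCDF_eq_cdf_gaussianReal (hv : 0 < v) : nCDF μ v = cdf (gaussianReal μ v.toNNReal) := by
  ext x
  rw [cdf_eq_real, measureReal_def, gaussianReal_apply_eq_integral _ (by simpa using hv),
    ENNReal.toReal_ofReal (setIntegral_nonneg measurableSet_Iic fun t _ =>
      gaussianPDFReal_nonneg _ _ t), gaussianPDFReal_def, Real.coe_toNNReal _ hv.le]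
  rfl

lemma hasDerivAt_nCDF (hv : 0 ≤ v) (x : ℝ) : HasDerivAt (nCDF μ v) (nPDF μ v x) x := by
  have hint := integrable_nPDF (μ := μ) hv
  have hFTC : HasDerivAt (fun y => ∫ t in (0 : ℝ)..y, nPDF μ v t) (nPDF μ v x) x :=
    intervalIntegral.integral_hasDerivAt_right hint.intervalIntegrable
      (continuous_nPDF.stronglyMeasurableAtFilter _ _) continuous_nPDF.continuousAt
  refine (hFTC.const_add (nCDF μ v 0)).congr_of_eventuallyEq (Eventually.of_forall fun y => ?_)
  show nCDF μ v y = nCDF μ v 0 + ∫ t in (0 : ℝ)..y, nPDF μ v t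
  rw [← intervalIntegral.integral_Iic_sub_Iic hint.integrableOn hint.integrableOn]
  unfold nCDF
  ring

lemma strictMono_nCDF (hv : 0 < v) : StrictMono (nCDF μ v) :=
  strictMono_of_deriv_pos fun x => (hasDerivAt_nCDF hv.le x).deriv ▸ nPDF_pos hv x

lemma nCDF_mem_Ioo (hv : 0 < v) (x : ℝ) : nCDF μ v x ∈ Ioo 0 1 := by
  have hmono := strictMono_nCDF (μ := μ) hv
  rw [nCDF_eq_cdf_gaussianReal hv] at hmono ⊢
  exact ⟨(cdf_nonneg _ (x - 1)).trans_lt (hmono (sub_one_lt x)),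
    (hmono (lt_add_one x)).trans_le (cdf_le_one _ _)⟩

lemma tendsto_nCDF_atBot (hv : 0 < v) : Tendsto (nCDF μ v) atBot (𝓝 0) :=
  nCDF_eq_cdf_gaussianReal hv ▸ tendsto_cdf_atBot _

lemma tendsto_nCDF_atTop (hv : 0 < v) : Tendsto (nCDF μ v) atTop (𝓝 1) :=
  nCDF_eq_cdf_gaussianReal hv ▸ tendsto_cdf_atTop _

noncomputable def pdfRatio (μ v x : ℝ) : ℝ := nPDF 0 1 x / nPDF μ v x

lemma pdfRatio_pos (hv : 0 < v) (x : ℝ) : 0 < pdfRatio μ v x :=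
  div_pos (nPDF_pos one_pos x) (nPDF_pos hv x)

lemma pdfRatio_mul_nPDF (hv : 0 < v) (x : ℝ) : pdfRatio μ v x * nPDF μ v x = nPDF 0 1 x :=
  div_mul_cancel₀ _ (nPDF_pos hv x).ne'

lemma pdfRatio_eq (hv : 1 < v) (x : ℝ) :
    pdfRatio μ v x =
      √v * exp (μ ^ 2 / (2 * (v - 1)) - (v - 1) / (2 * v) * (x - μ / (1 - v)) ^ 2) := by
  have hv0 : 0 < v := by linarith
  have hsqrt : √(2 * π * v) = √(2 * π * 1) * √v := by
    rw [mul_one, Real.sqrt_mul (by positivity)]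
  have hexp : μ ^ 2 / (2 * (v - 1)) - (v - 1) / (2 * v) * (x - μ / (1 - v)) ^ 2
      = -(x - 0) ^ 2 / (2 * 1) - -(x - μ) ^ 2 / (2 * v) := by
    have : v - 1 ≠ 0 := by linarith
    have : 1 - v ≠ 0 := by linarith
    field_simp
    ring
  rw [pdfRatio, nPDF, nPDF, hsqrt, hexp, exp_sub]
  have : √v ≠ 0 := (Real.sqrt_pos.2 hv0).ne'
  field_simp

lemma hasDerivAt_pdfRatio (hv : 1 < v) (x : ℝ) :
    HasDerivAt (pdfRatio μ v) (-((v - 1) / v) * (x - μ / (1 - v)) * pdfRatio μ v x) x := by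
  have hexp : HasDerivAt
      (fun y => μ ^ 2 / (2 * (v - 1)) - (v - 1) / (2 * v) * (y - μ / (1 - v)) ^ 2)
      (-((v - 1) / v) * (x - μ / (1 - v))) x := by
    refine ((((hasDerivAt_id' x).sub_const (μ / (1 - v))).fun_pow 2).const_mul
      ((v - 1) / (2 * v)) |>.const_sub (μ ^ 2 / (2 * (v - 1)))).congr_deriv ?_
    field_simp
    ring
  rw [funext (pdfRatio_eq hv)]
  exact (hexp.exp.const_mul √v).congr_deriv (by ring)

lemma tendsto_pdfRatio_cocompact (hv : 1 < v) :
    Tendsto (pdfRatio μ v) (cocompact ℝ) (𝓝 0) := by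
  have hκ : 0 < (v - 1) / (2 * v) := div_pos (by linarith) (by linarith)
  have hsq : Tendsto (fun y => (y - μ / (1 - v)) ^ 2) (cocompact ℝ) atTop :=
    ((tendsto_pow_atTop two_ne_zero).comp (tendsto_dist_right_cocompact_atTop (μ / (1 - v)))).congr
      fun y => by simp [Real.dist_eq, sq_abs]
  have hexp : Tendsto
      (fun y => μ ^ 2 / (2 * (v - 1)) - (v - 1) / (2 * v) * (y - μ / (1 - v)) ^ 2)
      (cocompact ℝ) atBot :=
    (tendsto_atBot_add_const_left _ (μ ^ 2 / (2 * (v - 1)))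
      (tendsto_neg_atTop_atBot.comp (hsq.const_mul_atTop hκ))).congr fun y => by
        simp [sub_eq_add_neg]
  simpa [funext (pdfRatio_eq hv)] using (tendsto_exp_atBot.comp hexp).const_mul √v

section SignChange

variable {f g : ℝ → ℝ} {a : ℝ} {D : Set ℝ}

lemma strictMonoOn_of_hasDerivAt_sub_mul (hD : Convex ℝ D) (hDa : D ⊆ Ici a)
    (hf : ∀ x, HasDerivAt f ((x - a) * g x) x) (hg : ∀ x ∈ interior D, 0 < g x) :
    StrictMonoOn f D := by
  refine strictMonoOn_of_deriv_pos hD (fun x _ => (hf x).continuousAt.continuousWithinAt)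
    fun x hx => ?_
  have hax : a < x := by simpa using interior_mono hDa hx
  rw [(hf x).deriv]
  exact mul_pos (sub_pos.2 hax) (hg x hx)

lemma strictAntiOn_of_hasDerivAt_sub_mul (hD : Convex ℝ D) (hDa : D ⊆ Iic a)
    (hf : ∀ x, HasDerivAt f ((x - a) * g x) x) (hg : ∀ x ∈ interior D, 0 < g x) :
    StrictAntiOn f D := by
  refine strictAntiOn_of_deriv_neg hD (fun x _ => (hf x).continuousAt.continuousWithinAt)
    fun x hx => ?_
  have hxa : x < a := by simpa using interior_mono hDa hx
  rw [(hf x).deriv]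
  exact mul_neg_of_neg_of_pos (sub_neg.2 hxa) (hg x hx)

lemma StrictMonoOn.exists_zero_iff [D.OrdConnected] (hf : StrictMonoOn f D)
    (hc : ContinuousOn f D) {b c : ℝ} (hb : b ∈ D) (hc' : c ∈ D) (hfb : f b < 0) (hfc : 0 < f c) :
    ∃ z ∈ Ioo b c, ∀ x ∈ D, f x = 0 ↔ x = z := by
  have hbc : b < c := (hf.lt_iff_lt hb hc').1 (hfb.trans hfc)
  obtain ⟨z, hz, hz0⟩ := intermediate_value_Ioo hbc.le (hc.mono (D.Icc_subset hb hc')) ⟨hfb, hfc⟩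
  have hzD : z ∈ D := D.Icc_subset hb hc' (Ioo_subset_Icc_self hz)
  exact ⟨z, hz, fun x hx => ⟨fun h => hf.injOn hx hzD (h.trans hz0.symm), fun h => h ▸ hz0⟩⟩

lemma StrictAntiOn.exists_zero_iff [D.OrdConnected] (hf : StrictAntiOn f D)
    (hc : ContinuousOn f D) {b c : ℝ} (hb : b ∈ D) (hc' : c ∈ D) (hfb : 0 < f b) (hfc : f c < 0) :
    ∃ z ∈ Ioo b c, ∀ x ∈ D, f x = 0 ↔ x = z := by
  obtain ⟨z, hz, h⟩ := hf.neg.exists_zero_iff hc.neg hb hc' (neg_lt_zero.2 hfb) (neg_pos.2 hfc)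
  exact ⟨z, hz, fun x hx => by simpa using h x hx⟩

lemma StrictAntiOn.lt_of_tendsto_atBot (hf : StrictAntiOn f (Iic a)) {y : ℝ}
    (hlim : Tendsto f atBot (𝓝 y)) {x : ℝ} (hx : x ≤ a) : f x < y := by
  have hle : f (x - 1) ≤ y := ge_of_tendsto hlim <| (eventually_le_atBot (x - 1)).mono
    fun t ht => hf.antitoneOn (mem_Iic.2 (by linarith)) (mem_Iic.2 (by linarith)) ht
  exact (hf (mem_Iic.2 (by linarith)) hx (sub_one_lt x)).trans_le hle

end SignChange

lemma div_eq_iff_eq_mul_of_ne_zero {G₀ : Type*} [GroupWithZero G₀] {a b r : G₀} (ha : a ≠ 0)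
    (hr : r ≠ 0) : a / b = r ↔ a = r * b := by
  rcases eq_or_ne b 0 with rfl | hb
  · simp [ha, hr.symm]
  · exact div_eq_iff hb

lemma hasDerivAt_sub_pdfRatio_mul (hv : 1 < v) {A B : ℝ → ℝ} {x b : ℝ}
    (hA : HasDerivAt A (pdfRatio μ v x * b) x) (hB : HasDerivAt B b x) :
    HasDerivAt (fun y => A y - pdfRatio μ v y * B y)
      ((x - μ / (1 - v)) * ((v - 1) / v * pdfRatio μ v x * B x)) x :=
  (hA.sub ((hasDerivAt_pdfRatio hv x).mul hB)).congr_deriv (by ring)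

lemma tendsto_sub_pdfRatio_mul (hv : 1 < v) {A B : ℝ → ℝ} {l : Filter ℝ} {a : ℝ}
    (hl : l ≤ cocompact ℝ) (hA : Tendsto A l (𝓝 a)) (hB : ∀ x, |B x| ≤ 1) :
    Tendsto (fun y => A y - pdfRatio μ v y * B y) l (𝓝 a) := by
  simpa using hA.sub (((tendsto_pdfRatio_cocompact hv).mono_left hl).zero_mul_isBoundedUnder_le
    (isBoundedUnder_of ⟨1, hB⟩))

noncomputable def lowerTailGap (μ v x : ℝ) : ℝ := nCDF 0 1 x - pdfRatio μ v x * nCDF μ v x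

noncomputable def upperTailGap (μ v c x : ℝ) : ℝ :=
  (1 - nCDF 0 1 x) - pdfRatio μ v x * (c - nCDF μ v x)

lemma div_eq_pdfRatio_iff_lowerTailGap_eq_zero (hv : 0 < v) (x : ℝ) :
    nCDF 0 1 x / nCDF μ v x = nPDF 0 1 x / nPDF μ v x ↔ lowerTailGap μ v x = 0 := by
  change _ = pdfRatio μ v x ↔ _
  rw [div_eq_iff_eq_mul_of_ne_zero (nCDF_mem_Ioo one_pos x).1.ne' (pdfRatio_pos hv x).ne',
    lowerTailGap, sub_eq_zero]

lemma div_eq_pdfRatio_iff_upperTailGap_eq_zero (hv : 0 < v) (c x : ℝ) :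
    (1 - nCDF 0 1 x) / (c - nCDF μ v x) = nPDF 0 1 x / nPDF μ v x ↔
      upperTailGap μ v c x = 0 := by
  change _ = pdfRatio μ v x ↔ _
  rw [div_eq_iff_eq_mul_of_ne_zero (sub_pos.2 (nCDF_mem_Ioo one_pos x).2).ne'
    (pdfRatio_pos hv x).ne', upperTailGap, sub_eq_zero]

lemma hasDerivAt_lowerTailGap (hv : 1 < v) (x : ℝ) :
    HasDerivAt (lowerTailGap μ v)
      ((x - μ / (1 - v)) * ((v - 1) / v * pdfRatio μ v x * nCDF μ v x)) x := by
  have hv0 : 0 < v := by linarith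
  refine hasDerivAt_sub_pdfRatio_mul hv ?_ (hasDerivAt_nCDF hv0.le x)
  rw [pdfRatio_mul_nPDF hv0]
  exact hasDerivAt_nCDF zero_le_one x

lemma hasDerivAt_upperTailGap (hv : 1 < v) (c x : ℝ) :
    HasDerivAt (upperTailGap μ v c)
      ((x - μ / (1 - v)) * ((v - 1) / v * pdfRatio μ v x * (c - nCDF μ v x))) x := by
  have hv0 : 0 < v := by linarith
  refine hasDerivAt_sub_pdfRatio_mul hv ?_ ((hasDerivAt_nCDF hv0.le x).const_sub c)
  rw [mul_neg, pdfRatio_mul_nPDF hv0]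
  exact (hasDerivAt_nCDF zero_le_one x).const_sub 1

lemma tendsto_lowerTailGap_atBot (hv : 1 < v) : Tendsto (lowerTailGap μ v) atBot (𝓝 0) :=
  have hv0 : 0 < v := by linarith
  tendsto_sub_pdfRatio_mul hv atBot_le_cocompact (tendsto_nCDF_atBot one_pos) fun x =>
    abs_le.2 ⟨by linarith [(nCDF_mem_Ioo (μ := μ) hv0 x).1], (nCDF_mem_Ioo hv0 x).2.le⟩

lemma tendsto_lowerTailGap_atTop (hv : 1 < v) : Tendsto (lowerTailGap μ v) atTop (𝓝 1) :=
  have hv0 : 0 < v := by linarith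
  tendsto_sub_pdfRatio_mul hv atTop_le_cocompact (tendsto_nCDF_atTop one_pos) fun x =>
    abs_le.2 ⟨by linarith [(nCDF_mem_Ioo (μ := μ) hv0 x).1], (nCDF_mem_Ioo hv0 x).2.le⟩

lemma tendsto_upperTailGap_atBot (hv : 1 < v) (s : ℝ) :
    Tendsto (upperTailGap μ v (nCDF μ v s)) atBot (𝓝 1) := by
  have hv0 : 0 < v := by linarith
  have hΦ := nCDF_mem_Ioo (μ := μ) hv0
  refine tendsto_sub_pdfRatio_mul hv atBot_le_cocompact
    (by simpa using (tendsto_nCDF_atBot one_pos).const_sub 1) fun x =>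
      abs_le.2 ⟨by linarith [(hΦ s).1, (hΦ x).2], by linarith [(hΦ s).2, (hΦ x).1]⟩

lemma exists_lowerTailGap_eq_zero_iff (hv : 1 < v) :
    ∃ α, μ / (1 - v) < α ∧ ∀ x, lowerTailGap μ v x = 0 ↔ x = α := by
  have hv0 : 0 < v := by linarith
  have hderiv := hasDerivAt_lowerTailGap (μ := μ) hv
  have hg : ∀ x, 0 < (v - 1) / v * pdfRatio μ v x * nCDF μ v x := fun x =>
    mul_pos (mul_pos (div_pos (by linarith) hv0) (pdfRatio_pos hv0 x)) (nCDF_mem_Ioo hv0 x).1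
  have hanti : StrictAntiOn (lowerTailGap μ v) (Iic (μ / (1 - v))) :=
    strictAntiOn_of_hasDerivAt_sub_mul (convex_Iic _) subset_rfl hderiv fun x _ => hg x
  have hmono : StrictMonoOn (lowerTailGap μ v) (Ici (μ / (1 - v))) :=
    strictMonoOn_of_hasDerivAt_sub_mul (convex_Ici _) subset_rfl hderiv fun x _ => hg x
  have hneg : ∀ x ≤ μ / (1 - v), lowerTailGap μ v x < 0 := fun x hx =>
    hanti.lt_of_tendsto_atBot (tendsto_lowerTailGap_atBot hv) hx
  obtain ⟨b, hb, hb0⟩ := (((tendsto_lowerTailGap_atTop hv).eventually (lt_mem_nhds one_pos)).and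
    (eventually_ge_atTop (μ / (1 - v)))).exists
  obtain ⟨α, hα, hzero⟩ := hmono.exists_zero_iff
    (continuous_iff_continuousAt.2 fun x => (hderiv x).continuousAt).continuousOn
    self_mem_Ici (mem_Ici.2 hb0) (hneg _ le_rfl) hb
  refine ⟨α, hα.1, fun x => ?_⟩
  rcases le_or_gt x (μ / (1 - v)) with hx | hx
  · exact iff_of_false (hneg x hx).ne (by rintro rfl; linarith [hα.1])
  · exact hzero x hx.le

lemma upperTailGap_pos (hv : 0 < v) {s x : ℝ} (hsx : s ≤ x) :
    0 < upperTailGap μ v (nCDF μ v s) x := by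
  have hΦ : nCDF μ v s - nCDF μ v x ≤ 0 := sub_nonpos.2 ((strictMono_nCDF hv).monotone hsx)
  have := mul_nonpos_of_nonneg_of_nonpos (pdfRatio_pos (μ := μ) hv x).le hΦ
  have := (nCDF_mem_Ioo (μ := 0) one_pos x).2
  unfold upperTailGap
  linarith

lemma upperTailGap_neg (hv : 0 < v) {α c : ℝ} (hα : lowerTailGap μ v α = 0)
    (hc : nCDF μ v α / nCDF 0 1 α < c) : upperTailGap μ v c α < 0 := by
  have hΦα := (nCDF_mem_Ioo (μ := μ) hv α).1
  have hΦ01 : nCDF 0 1 α = pdfRatio μ v α * nCDF μ v α := sub_eq_zero.1 hα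
  rw [div_lt_iff₀ (nCDF_mem_Ioo one_pos α).1, hΦ01, ← mul_assoc] at hc
  have hone : 1 < c * pdfRatio μ v α := lt_of_mul_lt_mul_right (by linarith) hΦα.le
  have hgap : upperTailGap μ v c α = 1 - c * pdfRatio μ v α := by
    unfold upperTailGap; linear_combination -hΦ01
  linarith

lemma exists_upperTailGap_eq_zero_iff (hv : 1 < v) {s t : ℝ} (ht : μ / (1 - v) < t)
    (hkt : upperTailGap μ v (nCDF μ v s) t < 0) :
    ∃ β' β, β' < μ / (1 - v) ∧ t < β ∧
      ∀ x, upperTailGap μ v (nCDF μ v s) x = 0 ↔ x = β' ∨ x = β := by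
  have hv0 : 0 < v := by linarith
  set k := upperTailGap μ v (nCDF μ v s)
  have hderiv := hasDerivAt_upperTailGap (μ := μ) hv (nCDF μ v s)
  have hcont : Continuous k := continuous_iff_continuousAt.2 fun x => (hderiv x).continuousAt
  have hts : t < s := lt_of_not_ge fun hst => (upperTailGap_pos hv0 hst).not_gt hkt
  have hg : ∀ x < s, 0 < (v - 1) / v * pdfRatio μ v x * (nCDF μ v s - nCDF μ v x) := fun x hx =>
    mul_pos (mul_pos (div_pos (by linarith) hv0) (pdfRatio_pos hv0 x))
      (sub_pos.2 (strictMono_nCDF hv0 hx))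
  have hanti : StrictAntiOn k (Iic (μ / (1 - v))) :=
    strictAntiOn_of_hasDerivAt_sub_mul (convex_Iic _) subset_rfl hderiv fun x hx =>
      hg x (by rw [interior_Iic] at hx; linarith [mem_Iio.1 hx])
  have hmono : StrictMonoOn k (Icc (μ / (1 - v)) s) :=
    strictMonoOn_of_hasDerivAt_sub_mul (convex_Icc _ _) Icc_subset_Ici_self hderiv fun x hx =>
      hg x (by rw [interior_Icc] at hx; exact hx.2)
  have hkmin : k (μ / (1 - v)) < 0 :=
    (hmono ⟨le_rfl, by linarith⟩ ⟨ht.le, hts.le⟩ ht).trans hkt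
  obtain ⟨a, ha, ha'⟩ := (((tendsto_upperTailGap_atBot hv s).eventually (lt_mem_nhds one_pos)).and
    (eventually_le_atBot (μ / (1 - v)))).exists
  obtain ⟨β', hβ', hzero'⟩ :=
    hanti.exists_zero_iff hcont.continuousOn (mem_Iic.2 ha') self_mem_Iic ha hkmin
  obtain ⟨β, hβ, hzero⟩ := hmono.exists_zero_iff hcont.continuousOn ⟨ht.le, hts.le⟩
    ⟨by linarith, le_rfl⟩ hkt (upperTailGap_pos hv0 le_rfl)
  refine ⟨β', β, hβ'.2, hβ.1, fun x => ?_⟩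
  rcases le_or_gt x (μ / (1 - v)) with hx | hx
  · rw [hzero' x hx, iff_self_or]
    rintro rfl; linarith [hβ.1]
  rcases le_or_gt x s with hxs | hxs
  · rw [hzero x ⟨hx.le, hxs⟩, iff_or_self]
    rintro rfl; linarith [hβ'.2]
  · exact iff_of_false (upperTailGap_pos hv0 hxs.le).ne'
      (by rintro (rfl | rfl) <;> linarith [hβ'.2, hβ.2])

/-- Lemma 3: for `v > 1`, the equation `Φ(x)/Φ_{μ,v}(x) = N(x)/N_{μ,v}(x)` has a
unique real solution `α`.  Moreover, for any `s` with
`s > Φ_{μ,v}^{-1}(Φ_{μ,v}(α)/Φ(α))` (equivalently, `Φ_{μ,v}(s) > Φ_{μ,v}(α)/Φ(α)`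
since `Φ_{μ,v}` is a strictly increasing bijection onto `(0,1)`), the equation
`(1 − Φ(x)) / (Φ_{μ,v}(s) − Φ_{μ,v}(x)) = N(x) / N_{μ,v}(x)` has exactly two real
solutions, and exactly the larger of the two is greater than `α`. -/
theorem unique_solution_gt_one (v μ : ℝ) (hv : 1 < v) :
    ∃ α : ℝ,
      (∀ x : ℝ, nCDF 0 1 x / nCDF μ v x = nPDF 0 1 x / nPDF μ v x ↔ x = α) ∧
      ∀ s : ℝ, nCDF μ v α / nCDF 0 1 α < nCDF μ v s →
        ∃ β' β : ℝ, β' < β ∧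
          (∀ x : ℝ,
            (1 - nCDF 0 1 x) / (nCDF μ v s - nCDF μ v x) = nPDF 0 1 x / nPDF μ v x ↔
              (x = β' ∨ x = β)) ∧
          α < β ∧ β' ≤ α := by
  have hv0 : 0 < v := by linarith
  obtain ⟨α, hmodeα, hα⟩ := exists_lowerTailGap_eq_zero_iff (μ := μ) hv
  refine ⟨α, fun x => (div_eq_pdfRatio_iff_lowerTailGap_eq_zero hv0 x).trans (hα x),
    fun s hs => ?_⟩
  obtain ⟨β', β, hβ'mode, hαβ, hβ⟩ :=
    exists_upperTailGap_eq_zero_iff hv hmodeα (upperTailGap_neg hv0 ((hα α).2 rfl) hs)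
  exact ⟨β', β, by linarith, fun x => (div_eq_pdfRatio_iff_upperTailGap_eq_zero hv0 _ x).trans
    (hβ x), hαβ, by linarith⟩
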